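/- arXiv:2406.12799 — 2 statements merged into one kernel-verified Lean document; each statement's English description precedes it below -/
import Mathlib

section
/- Let M be a matroid on a finite ground set U and let w : U → ℝ be a nonnegative weight function. Suppose A is a basis of M of maximum total weight, i.e., w(A) ≥ w(B') for every basis B' of M. Then for every basis B of M there exists a bijection f : A → B such that for every x ∈ A the set (B \ {f(x)}) ∪ {x} is a basis of M and w(f(x)) ≤ w(x); moreover, f(x) = x for every x ∈ A ∩ B. -/
open Classical

/-- A matroid on a finite ground set `α`, given by its independent sets. -/
structure FinMatroid (α : Type*) [DecidableEq α] [Fintype α] where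
  /-- The independent sets. -/
  Indep : Finset α → Prop
  indep_empty : Indep ∅
  indep_subset : ∀ ⦃I J : Finset α⦄, Indep J → I ⊆ J → Indep I
  indep_exchange : ∀ ⦃I J : Finset α⦄, Indep I → Indep J → I.card < J.card →
    ∃ e ∈ J, e ∉ I ∧ Indep (insert e I)

namespace FinMatroid

variable {α : Type*} [DecidableEq α] [Fintype α]

/-- A basis of the matroid: a maximal independent set. -/
def Base (M : FinMatroid α) (B : Finset α) : Prop :=
  M.Indep B ∧ ∀ e : α, e ∉ B → ¬ M.Indep (insert e B)

/-- The rank of a set: the size of a largest independent subset. -/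
noncomputable def rank (M : FinMatroid α) (S : Finset α) : ℕ :=
  (S.powerset.filter M.Indep).sup Finset.card

/-- The span of a set: the elements whose insertion does not increase the rank. -/
noncomputable def span (M : FinMatroid α) (S : Finset α) : Finset α :=
  Finset.univ.filter fun e => M.rank (insert e S) = M.rank S

end FinMatroid

/-! A maximum-weight base `A` cannot be improved by a single exchange, and this local optimality
already places every element `e` in the closure of the elements of `A` at least as heavy as `e`:
every `a` on the fundamental circuit of `e` in `A` can be exchanged for `e`, so `w e ≤ w a`.
Applied along the fundamental circuit of `x ∈ A \ B` in `B`, it puts `x` in the closure of its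
admissible partners `y ∈ B` (those with `B - y + x` a base and `w y ≤ w x`) together with the
strictly heavier elements of `A`. Going down `A` from its heaviest element, for every `S ⊆ A`
all of `A` lies in the closure of the partners `N(S)` of `S` together with `A \ S`; comparing
ranks gives Hall's condition `|S| ≤ |N(S)|`. The resulting matching `A → B` is an injection
between bases, which have the same size, hence a bijection. -/

namespace Matroid

variable {α : Type*} {M : Matroid α} {w : α → ℝ}

section Closure

variable {A B : Set α} {e x : α}

lemma IsBase.mem_closure_setOf_isBase_exchange (hB : M.IsBase B) (he : e ∈ M.E) (heB : e ∉ B) :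
    e ∈ M.closure {y ∈ B | M.IsBase (insert e (B \ {y}))} := by
  have hC := hB.fundCircuit_isCircuit he heB
  refine M.closure_subset_closure ?_
    (hC.mem_closure_sdiff_singleton_of_mem (M.mem_fundCircuit e B))
  rintro y ⟨hyC, hye : y ≠ e⟩
  have hyB : y ∈ B := by simpa [hye] using M.fundCircuit_subset_insert e B hyC
  have hindep := (hB.indep.mem_fundCircuit_iff (by rwa [hB.closure_eq]) heB).1 hyC
  rw [← Set.insert_sdiff_singleton_comm hye.symm] at hindep
  exact ⟨hyB, hB.exchange_isBase_of_indep heB hindep⟩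

lemma Indep.encard_le_encard_of_subset_closure {I X : Set α} (hI : M.Indep I)
    (hIX : I ⊆ M.closure X) : I.encard ≤ X.encard :=
  calc I.encard = M.eRk I := hI.eRk_eq_encard.symm
    _ ≤ M.eRk (M.closure X) := M.eRk_mono hIX
    _ = M.eRk X := M.eRk_closure_eq X
    _ ≤ X.encard := M.eRk_le_encard X

structure IsLocalMaxWeightBase (M : Matroid α) (w : α → ℝ) (A : Set α) : Prop where
  isBase : M.IsBase A
  weight_le : ∀ a ∈ A, ∀ e ∉ A, M.IsBase (insert e (A \ {a})) → w e ≤ w a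

lemma IsLocalMaxWeightBase.mem_closure_setOf_le (hA : M.IsLocalMaxWeightBase w A)
    (he : e ∈ M.E) : e ∈ M.closure {a ∈ A | w e ≤ w a} := by
  by_cases heA : e ∈ A
  · exact M.mem_closure_of_mem' ⟨heA, le_rfl⟩
  refine M.closure_subset_closure ?_ (hA.isBase.mem_closure_setOf_isBase_exchange he heA)
  exact fun a ⟨haA, hexch⟩ ↦ ⟨haA, hA.weight_le a haA e heA hexch⟩

lemma IsLocalMaxWeightBase.mem_closure_exchange_union_heavier
    (hA : M.IsLocalMaxWeightBase w A) (hB : M.IsBase B) (hx : x ∈ M.E) (hxB : x ∉ B) :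
    x ∈ M.closure
      ({y ∈ B | M.IsBase (insert x (B \ {y})) ∧ w y ≤ w x} ∪ {a ∈ A | w x < w a}) := by
  refine M.closure_subset_closure_of_subset_closure ?_
    (hB.mem_closure_setOf_isBase_exchange hx hxB)
  rintro y ⟨hyB, hexch⟩
  obtain hyx | hxy := le_or_gt (w y) (w x)
  · exact M.mem_closure_of_mem' (Or.inl ⟨hyB, hexch, hyx⟩) (hB.subset_ground hyB)
  · refine M.closure_subset_closure ?_ (hA.mem_closure_setOf_le (hB.subset_ground hyB))
    exact fun a ⟨haA, hya⟩ ↦ Or.inr ⟨haA, hxy.trans_le hya⟩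

end Closure

section Matching

open scoped Finset

variable [DecidableEq α] {A B S : Finset α}

noncomputable def exchangeCandidates (M : Matroid α) (w : α → ℝ) (B : Finset α) (x : α) :
    Finset α :=
  {y ∈ B | M.IsBase (insert x (↑B \ {y})) ∧ w y ≤ w x ∧ (x ∈ B → y = x)}

lemma mem_exchangeCandidates {x y : α} : y ∈ M.exchangeCandidates w B x ↔
    y ∈ B ∧ M.IsBase (insert x (↑B \ {y})) ∧ w y ≤ w x ∧ (x ∈ B → y = x) := by
  simp [exchangeCandidates]

lemma exchangeCandidates_subset (x : α) : M.exchangeCandidates w B x ⊆ B :=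
  fun _ hy ↦ (mem_exchangeCandidates.1 hy).1

lemma isLocalMaxWeightBase_of_forall_sum_le (hA : M.IsBase ↑A)
    (hAmax : ∀ B : Finset α, M.IsBase ↑B → ∑ e ∈ B, w e ≤ ∑ e ∈ A, w e) :
    M.IsLocalMaxWeightBase w ↑A where
  isBase := hA
  weight_le a ha e he hexch := by
    have hsum := hAmax (insert e (A.erase a)) (by simpa using hexch)
    rw [Finset.sum_insert (fun h ↦ he (Finset.mem_of_mem_erase h)),
      Finset.sum_erase_eq_sub ha] at hsum
    linarith

lemma IsLocalMaxWeightBase.subset_closure_biUnion_exchangeCandidates_union_sdiff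
    (hA : M.IsLocalMaxWeightBase w ↑A) (hB : M.IsBase ↑B) :
    (↑A : Set α) ⊆ M.closure ↑(S.biUnion (M.exchangeCandidates w B) ∪ (A \ S)) := by
  set X := S.biUnion (M.exchangeCandidates w B) ∪ (A \ S)
  have hXE : (↑X : Set α) ⊆ M.E := by
    intro y hy
    obtain hyT | hyA := Finset.mem_union.1 hy
    · obtain ⟨x, -, hyx⟩ := Finset.mem_biUnion.1 hyT
      exact hB.subset_ground (exchangeCandidates_subset x hyx)
    · exact hA.isBase.subset_ground (Finset.mem_sdiff.1 hyA).1
  by_contra hAX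
  obtain ⟨x, hx, hmax⟩ := Finset.exists_max_image {a ∈ A | a ∉ M.closure ↑X} w (by
    obtain ⟨a, haA, ha⟩ := Set.not_subset.1 hAX
    exact ⟨a, Finset.mem_filter.2 ⟨haA, ha⟩⟩)
  obtain ⟨hxA, hxX⟩ := Finset.mem_filter.1 hx
  have hheavy : {a ∈ (↑A : Set α) | w x < w a} ⊆ M.closure ↑X := fun a ⟨haA, hxa⟩ ↦
    by_contra fun ha ↦ (hmax a (Finset.mem_filter.2 ⟨haA, ha⟩)).not_gt hxa
  have hxS : x ∈ S := by_contra fun hxS ↦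
    hxX (M.mem_closure_of_mem (Finset.mem_union_right _ (Finset.mem_sdiff.2 ⟨hxA, hxS⟩)))
  have hcand : M.exchangeCandidates w B x ⊆ X := fun y hy ↦
    Finset.mem_union_left _ (Finset.mem_biUnion.2 ⟨x, hxS, hy⟩)
  apply hxX
  by_cases hxB : x ∈ B
  · refine M.mem_closure_of_mem
      (hcand (mem_exchangeCandidates.2 ⟨hxB, ?_, le_rfl, fun _ ↦ rfl⟩))
    rwa [Set.insert_sdiff_singleton, Set.insert_eq_of_mem (Finset.mem_coe.2 hxB)]
  refine M.closure_subset_closure_of_subset_closure ?_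
    (hA.mem_closure_exchange_union_heavier hB (hA.isBase.subset_ground hxA) hxB)
  rintro y (⟨hyB, hexch, hyx⟩ | hy)
  · exact M.mem_closure_of_mem (hcand (mem_exchangeCandidates.2 ⟨hyB, hexch, hyx, hxB.elim⟩))
  · exact hheavy hy

lemma IsLocalMaxWeightBase.card_le_card_biUnion_exchangeCandidates
    (hA : M.IsLocalMaxWeightBase w ↑A) (hB : M.IsBase ↑B) (hSA : S ⊆ A) :
    #S ≤ #(S.biUnion (M.exchangeCandidates w B)) := by
  have hcard : #A ≤ #(S.biUnion (M.exchangeCandidates w B) ∪ (A \ S)) := by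
    exact_mod_cast hA.isBase.indep.encard_le_encard_of_subset_closure
      (hA.subset_closure_biUnion_exchangeCandidates_union_sdiff hB)
  have := Finset.card_union_le (S.biUnion (M.exchangeCandidates w B)) (A \ S)
  have := Finset.card_sdiff_of_subset hSA
  have := Finset.card_le_card hSA
  omega

theorem IsLocalMaxWeightBase.exists_equiv_mem_exchangeCandidates
    (hA : M.IsLocalMaxWeightBase w ↑A) (hB : M.IsBase ↑B) :
    ∃ f : A ≃ B, ∀ x : A, (f x : α) ∈ M.exchangeCandidates w B x := by
  obtain ⟨f, hf_inj, hf⟩ := (Finset.all_card_le_biUnion_card_iff_exists_injective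
    fun x : A ↦ M.exchangeCandidates w B x).1 fun s ↦ by
      have := hA.card_le_card_biUnion_exchangeCandidates hB (S := s.image Subtype.val)
        fun a ha ↦ by obtain ⟨x, -, rfl⟩ := Finset.mem_image.1 ha; exact x.2
      rwa [Finset.image_biUnion, Finset.card_image_of_injective _ Subtype.val_injective] at this
  let g : A → B := fun x ↦ ⟨f x, exchangeCandidates_subset _ (hf x)⟩
  have hg : Function.Injective g := fun x y h ↦ hf_inj (congrArg Subtype.val h)
  have hcard : Fintype.card A = Fintype.card B := by
    simpa using hA.isBase.encard_eq_encard_of_isBase hB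
  exact ⟨.ofBijective g ((Fintype.bijective_iff_injective_and_card g).2 ⟨hg, hcard⟩), hf⟩

end Matching

end Matroid

namespace FinMatroid

variable {α : Type*} [DecidableEq α] [Fintype α] {M : FinMatroid α}

def toMatroid (M : FinMatroid α) : Matroid α :=
  (IndepMatroid.ofFinset Set.univ M.Indep M.indep_empty M.indep_subset M.indep_exchange
    fun _ _ ↦ Set.subset_univ _).matroid

lemma toMatroid_indep_coe {I : Finset α} : M.toMatroid.Indep ↑I ↔ M.Indep I := by
  simp [toMatroid]

lemma base_iff_isBase_toMatroid {B : Finset α} : M.Base B ↔ M.toMatroid.IsBase ↑B := by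
  refine ⟨fun ⟨hB, hmax⟩ ↦ ?_, fun hB ↦ ⟨toMatroid_indep_coe.1 hB.indep, fun e he hins ↦ ?_⟩⟩
  · refine (toMatroid_indep_coe.2 hB).isBase_of_forall_insert fun e ⟨_, he⟩ hins ↦ ?_
    exact hmax e he (toMatroid_indep_coe.1 (by simpa using hins))
  · exact (hB.insert_dep ⟨Set.mem_univ e, he⟩).not_indep
      (by simpa using toMatroid_indep_coe.2 hins)

end FinMatroid

theorem stmt_0_general {α : Type*} [DecidableEq α] [Fintype α] (M : FinMatroid α)
    (w : α → ℝ)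
    (A : Finset α) (hA : M.Base A)
    (hAmax : ∀ B' : Finset α, M.Base B' → ∑ e ∈ B', w e ≤ ∑ e ∈ A, w e)
    (B : Finset α) (hB : M.Base B) :
    ∃ f : A ≃ B,
      (∀ x : A, M.Base (insert (x : α) (B.erase ((f x : α)))) ∧ w (f x) ≤ w x) ∧
      (∀ x : A, (x : α) ∈ B → ((f x : α) = (x : α))) := by
  have hAopt : M.toMatroid.IsLocalMaxWeightBase w ↑A :=
    Matroid.isLocalMaxWeightBase_of_forall_sum_le (FinMatroid.base_iff_isBase_toMatroid.1 hA)
      fun B' hB' ↦ hAmax B' (FinMatroid.base_iff_isBase_toMatroid.2 hB')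
  obtain ⟨f, hf⟩ :=
    hAopt.exists_equiv_mem_exchangeCandidates (FinMatroid.base_iff_isBase_toMatroid.1 hB)
  refine ⟨f, fun x ↦ ?_, fun x hxB ↦ ?_⟩ <;>
    obtain ⟨-, hexch, hwx, hfix⟩ := Matroid.mem_exchangeCandidates.1 (hf x)
  · exact ⟨FinMatroid.base_iff_isBase_toMatroid.2 (by simpa using hexch), hwx⟩
  · exact hfix hxB

/-- Monotone basis exchange (Lemma 2.4 of BFG19): if `A` is a maximum-weight basis and `B` is
any basis, there is a bijection `f : A → B` with `B - f(x) + x` a basis and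
`w (f x) ≤ w x` for all `x ∈ A`, fixing `A ∩ B` pointwise. -/
theorem stmt_0 {α : Type*} [DecidableEq α] [Fintype α] (M : FinMatroid α)
    (w : α → ℝ) (hw : ∀ e : α, 0 ≤ w e)
    (A : Finset α) (hA : M.Base A)
    (hAmax : ∀ B' : Finset α, M.Base B' → ∑ e ∈ B', w e ≤ ∑ e ∈ A, w e)
    (B : Finset α) (hB : M.Base B) :
    ∃ f : A ≃ B,
      (∀ x : A, M.Base (insert (x : α) (B.erase ((f x : α)))) ∧ w (f x) ≤ w x) ∧
      (∀ x : A, (x : α) ∈ B → ((f x : α) = (x : α))) :=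
  stmt_0_general M w A hA hAmax B hB
end

section
/- Let M be a matroid on a finite ground set U, let N ⊆ U, let μ be a probability measure on the (finite) powerset of U, and let c ∈ ℝ. For T ⊆ N and e ∈ U define P(T, e) = μ{ R ⊆ U : e ∈ span(((R ∩ N) ∪ T) \ {e}) }, and define the family 𝒯 = { T ⊆ N : for all e ∈ N \ T, P(T, e) ≤ c }. Then: (i) N ∈ 𝒯; (ii) if T₁ ∈ 𝒯 and T₂ ∈ 𝒯 then T₁ ∩ T₂ ∈ 𝒯; and (iii) 𝒯 has a unique minimum element, i.e., there exists S ∈ 𝒯 with S ⊆ T for every T ∈ 𝒯. -/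
open Classical

/-!
Adding elements to `T` can only enlarge `span (((R ∩ N) ∪ T).erase e)` (the span is monotone), so
`P(T, e)` is monotone in `T`. If `T₁, T₂ ∈ 𝒯` and `e ∈ N \ (T₁ ∩ T₂)`, then `e` lies outside one of
them, say `T₁`, and `P(T₁ ∩ T₂, e) ≤ P(T₁, e) ≤ c`. A nonempty family of subsets of a finite set
closed under intersection has the intersection of all its members as minimum.
-/

namespace FinMatroid

variable {α : Type*} [DecidableEq α] [Fintype α] (M : FinMatroid α)

lemma rank_mono {S S' : Finset α} (h : S ⊆ S') : M.rank S ≤ M.rank S' :=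
  Finset.sup_mono (Finset.filter_subset_filter _ (Finset.powerset_mono.2 h))

lemma card_le_rank {I S : Finset α} (hI : M.Indep I) (hIS : I ⊆ S) : I.card ≤ M.rank S :=
  Finset.le_sup (Finset.mem_filter.2 ⟨Finset.mem_powerset.2 hIS, hI⟩)

lemma exists_indep_card_eq_rank (S : Finset α) :
    ∃ I ⊆ S, M.Indep I ∧ I.card = M.rank S := by
  have hne : (S.powerset.filter M.Indep).Nonempty :=
    ⟨∅, Finset.mem_filter.2 ⟨Finset.empty_mem_powerset S, M.indep_empty⟩⟩
  obtain ⟨I, hI, hcard⟩ := Finset.exists_mem_eq_sup _ hne Finset.card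
  rw [Finset.mem_filter, Finset.mem_powerset] at hI
  exact ⟨I, hI.1, hI.2, hcard.symm⟩

lemma exists_indep_superset_card_eq_rank {S I : Finset α} (hI : M.Indep I) (hIS : I ⊆ S) :
    ∃ I', I ⊆ I' ∧ I' ⊆ S ∧ M.Indep I' ∧ I'.card = M.rank S := by
  induction h : M.rank S - I.card generalizing I with
  | zero => exact ⟨I, subset_rfl, hIS, hI, le_antisymm (M.card_le_rank hI hIS) (by omega)⟩
  | succ n ih =>
    obtain ⟨J, hJS, hJ, hJcard⟩ := M.exists_indep_card_eq_rank S
    obtain ⟨x, hxJ, hxI, hxI_indep⟩ := M.indep_exchange hI hJ (by omega)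
    have hcard := Finset.card_insert_of_notMem hxI
    obtain ⟨I', hxII', hI'S, hI', hI'card⟩ :=
      ih hxI_indep (Finset.insert_subset (hJS hxJ) hIS) (by omega)
    exact ⟨I', (Finset.subset_insert x I).trans hxII', hI'S, hI', hI'card⟩

lemma mem_span_iff {S : Finset α} {e : α} :
    e ∈ M.span S ↔ M.rank (insert e S) = M.rank S := by
  simp [span]

lemma not_indep_insert_of_mem_span {S I : Finset α} {e : α} (he : e ∈ M.span S) (heS : e ∉ S)
    (hIS : I ⊆ S) (hIcard : I.card = M.rank S) : ¬ M.Indep (insert e I) := fun heI => by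
  have := M.card_le_rank heI (Finset.insert_subset_insert e hIS)
  rw [Finset.card_insert_of_notMem (fun h => heS (hIS h)), (M.mem_span_iff).1 he] at this
  omega

lemma indep_insert_of_notMem_span {S I : Finset α} {e : α} (he : e ∉ M.span S)
    (hIS : I ⊆ S) (hI : M.Indep I) (hIcard : I.card = M.rank S) : M.Indep (insert e I) := by
  have hlt : M.rank S < M.rank (insert e S) :=
    (M.rank_mono (Finset.subset_insert e S)).lt_of_ne (Ne.symm ((M.mem_span_iff).not.1 he))
  obtain ⟨J, hJS, hJ, hJcard⟩ := M.exists_indep_card_eq_rank (insert e S)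
  obtain ⟨x, hxJ, hxI, hxI_indep⟩ := M.indep_exchange hI hJ (by omega)
  -- Any `x ∈ S` would give an independent subset of `S` of size `rank S + 1`.
  obtain rfl : x = e := by
    by_contra hxe
    have := M.card_le_rank hxI_indep
      (Finset.insert_subset ((Finset.mem_insert.1 (hJS hxJ)).resolve_left hxe) hIS)
    rw [Finset.card_insert_of_notMem hxI] at this
    omega
  exact hxI_indep

lemma span_mono {S S' : Finset α} (h : S ⊆ S') : M.span S ⊆ M.span S' := by
  intro e he
  by_cases heS' : e ∈ S'
  · rw [mem_span_iff, Finset.insert_eq_self.2 heS']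
  by_contra he'
  obtain ⟨I, hIS, hI, hIcard⟩ := M.exists_indep_card_eq_rank S
  obtain ⟨I', hII', hI'S', hI', hI'card⟩ := M.exists_indep_superset_card_eq_rank hI (hIS.trans h)
  exact M.not_indep_insert_of_mem_span he (fun heS => heS' (h heS)) hIS hIcard
    (M.indep_subset (M.indep_insert_of_notMem_span he' hI'S' hI' hI'card)
      (Finset.insert_subset_insert e hII'))

end FinMatroid

lemma sum_ite_le_sum_ite_of_imp {ι N : Type*} [Fintype ι] [AddCommMonoid N] [Preorder N]
    [AddLeftMono N] {A B : ι → Prop} [DecidablePred A] [DecidablePred B] {μ : ι → N}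
    (hμ : ∀ i, 0 ≤ μ i) (hAB : ∀ i, A i → B i) :
    (∑ i, if A i then μ i else 0) ≤ ∑ i, if B i then μ i else 0 := by
  simp only [← Finset.sum_filter]
  exact Finset.sum_le_sum_of_subset_of_nonneg (Finset.monotone_filter_right _ fun i _ => hAB i)
    fun i _ _ => hμ i

lemma forall_mem_sdiff_inter_le_of_monotone {α β : Type*} [DecidableEq α] [Preorder β]
    {P : Finset α → α → β} (hP : ∀ e, Monotone fun T => P T e) {N T₁ T₂ : Finset α} {c : β}
    (h₁ : ∀ e ∈ N \ T₁, P T₁ e ≤ c) (h₂ : ∀ e ∈ N \ T₂, P T₂ e ≤ c) :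
    ∀ e ∈ N \ (T₁ ∩ T₂), P (T₁ ∩ T₂) e ≤ c := by
  intro e he
  rw [Finset.mem_sdiff, Finset.mem_inter, not_and_or] at he
  rcases he with ⟨heN, heT₁ | heT₂⟩
  · exact (hP e Finset.inter_subset_left).trans (h₁ e (Finset.mem_sdiff.2 ⟨heN, heT₁⟩))
  · exact (hP e Finset.inter_subset_right).trans (h₂ e (Finset.mem_sdiff.2 ⟨heN, heT₂⟩))

lemma exists_forall_le_of_inf_closed {β : Type*} [Fintype β] [SemilatticeInf β] {p : β → Prop}
    (hne : ∃ a, p a) (hinf : ∀ a b, p a → p b → p (a ⊓ b)) : ∃ a, p a ∧ ∀ b, p b → a ≤ b := by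
  have hs : (Finset.univ.filter p).Nonempty := let ⟨a, ha⟩ := hne; ⟨a, by simpa using ha⟩
  refine ⟨(Finset.univ.filter p).inf' hs id,
    Finset.inf'_induction hs id (fun a ha b hb => hinf a b ha hb)
      fun b hb => (Finset.mem_filter.1 hb).2,
    fun b hb => Finset.inf'_le id (Finset.mem_filter.2 ⟨Finset.mem_univ b, hb⟩)⟩

theorem stmt_5_general {α : Type*} [DecidableEq α] [Fintype α] (M : FinMatroid α)
    (N : Finset α) (μ : Finset α → ℝ)
    (hμ0 : ∀ R : Finset α, 0 ≤ μ R) (c : ℝ) :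
    let P : Finset α → α → ℝ := fun T e =>
      ∑ R : Finset α, if e ∈ M.span (((R ∩ N) ∪ T).erase e) then μ R else 0
    let 𝒯 : Finset α → Prop := fun T => T ⊆ N ∧ ∀ e ∈ N \ T, P T e ≤ c
    𝒯 N ∧ (∀ T₁ T₂ : Finset α, 𝒯 T₁ → 𝒯 T₂ → 𝒯 (T₁ ∩ T₂)) ∧
      (∃ S : Finset α, 𝒯 S ∧ ∀ T : Finset α, 𝒯 T → S ⊆ T) := by
  intro P 𝒯
  have hP : ∀ e, Monotone fun T => P T e := fun e T T' hTT' =>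
    sum_ite_le_sum_ite_of_imp hμ0 fun R heR =>
      M.span_mono (Finset.erase_subset_erase e (Finset.union_subset_union_right hTT')) heR
  have hN : 𝒯 N := ⟨subset_rfl, by simp⟩
  have hinter : ∀ T₁ T₂ : Finset α, 𝒯 T₁ → 𝒯 T₂ → 𝒯 (T₁ ∩ T₂) := fun T₁ T₂ h₁ h₂ =>
    ⟨Finset.inter_subset_left.trans h₁.1,
      forall_mem_sdiff_inter_le_of_monotone hP h₁.2 h₂.2⟩
  exact ⟨hN, hinter, exists_forall_le_of_inf_closed ⟨N, hN⟩ hinter⟩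

/-- Uniqueness of `Select(N, c)`: the family `𝒯` of sets `T ⊆ N` such that every
`e ∈ N \ T` satisfies `P(T, e) ≤ c` contains `N`, is closed under intersection, and has a
unique minimum element. -/
theorem stmt_5 {α : Type*} [DecidableEq α] [Fintype α] (M : FinMatroid α)
    (N : Finset α) (μ : Finset α → ℝ)
    (hμ0 : ∀ R : Finset α, 0 ≤ μ R) (hμ1 : ∑ R : Finset α, μ R = 1) (c : ℝ) :
    let P : Finset α → α → ℝ := fun T e =>
      ∑ R : Finset α, if e ∈ M.span (((R ∩ N) ∪ T).erase e) then μ R else 0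
    let 𝒯 : Finset α → Prop := fun T => T ⊆ N ∧ ∀ e ∈ N \ T, P T e ≤ c
    𝒯 N ∧ (∀ T₁ T₂ : Finset α, 𝒯 T₁ → 𝒯 T₂ → 𝒯 (T₁ ∩ T₂)) ∧
      (∃ S : Finset α, 𝒯 S ∧ ∀ T : Finset α, 𝒯 T → S ⊆ T) :=
  stmt_5_general M N μ hμ0 c
end
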